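/- arXiv:1509.03130 — 5 statements merged into one kernel-verified Lean document; each statement's English description precedes it below -/
import Mathlib

section
/- Let p, r ∈ [2, ∞) be real numbers and set C_{r,p} := (r−1)·(p/(p+r−2))^p. Then for all real numbers z and t one has |z−t|^{p−2}(z−t)·(|z|^{r−2}z − |t|^{r−2}t) ≥ C_{r,p}·| |z|^{(r−2)/p}z − |t|^{(r−2)/p}t |^p. -/
/-!
Writing `φ_β(x) = |x|^β x`, one has `φ_β(z) - φ_β(t) = (β + 1) ∫_t^z |s|^β ds`. Jensen's
inequality for `x ↦ x^p` on `[t, z]` gives `(∫_t^z |s|^β)^p ≤ (z - t)^(p-1) ∫_t^z |s|^(βp)`, and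
for `β = (r - 2)/p` the last integral is `(φ_{r-2}(z) - φ_{r-2}(t)) / (r - 1)`, while
`(β + 1)^p = ((p + r - 2)/p)^p` is the reciprocal of the constant's second factor.
-/

open Real Set Filter Topology MeasureTheory

noncomputable def signedRpow (β x : ℝ) : ℝ := |x| ^ β * x

theorem hasDerivAt_signedRpow {β : ℝ} (hβ : 0 ≤ β) (x : ℝ) :
    HasDerivAt (signedRpow β) ((β + 1) * |x| ^ β) x := by
  rcases eq_or_ne x 0 with rfl | hx
  · rcases hβ.eq_or_lt with rfl | hβ
    · have : signedRpow 0 = id := funext fun s => by simp [signedRpow]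
      simpa [this] using hasDerivAt_id (0 : ℝ)
    rw [hasDerivAt_iff_tendsto_slope]
    have hcont : Tendsto (fun s : ℝ => |s| ^ β) (𝓝[≠] 0) (𝓝 ((β + 1) * |0| ^ β)) := by
      simpa [zero_rpow hβ.ne'] using
        ((continuous_abs.rpow_const fun _ => Or.inr hβ.le).tendsto 0).mono_left
          nhdsWithin_le_nhds
    refine hcont.congr' (eventually_nhdsWithin_of_forall fun s (hs : s ≠ 0) => ?_)
    simp [slope_def_field, signedRpow, hs]
  · refine (((hasDerivAt_abs hx).rpow_const (p := β) (Or.inl (abs_ne_zero.2 hx))).mul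
      (hasDerivAt_id x)).congr_deriv ?_
    have hsign :
        (SignType.sign x : ℝ) * β * |x| ^ (β - 1) * id x = β * (|x| ^ (β - 1) * |x|) := by
      rw [id_eq, ← sign_mul_self]; ring
    rw [hsign, rpow_sub_one (abs_ne_zero.2 hx), div_mul_cancel₀ _ (abs_ne_zero.2 hx)]
    ring

theorem signedRpow_neg (β x : ℝ) : signedRpow β (-x) = -signedRpow β x := by
  simp [signedRpow]

theorem signedRpow_sub_signedRpow {β : ℝ} (hβ : 0 ≤ β) (a b : ℝ) :
    signedRpow β b - signedRpow β a = (β + 1) * ∫ s in a..b, |s| ^ β := by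
  rw [← intervalIntegral.integral_const_mul]
  exact (intervalIntegral.integral_eq_sub_of_hasDerivAt (fun x _ => hasDerivAt_signedRpow hβ x)
    ((continuous_const.mul (continuous_abs.rpow_const fun _ => Or.inr hβ)).intervalIntegrable
      a b)).symm

theorem rpow_intervalIntegral_le {f : ℝ → ℝ} (hf : Continuous f) (hf0 : ∀ x, 0 ≤ f x)
    {p : ℝ} (hp : 1 ≤ p) {a b : ℝ} (hab : a ≤ b) :
    (∫ x in a..b, f x) ^ p ≤ (b - a) ^ (p - 1) * ∫ x in a..b, f x ^ p := by
  rcases hab.eq_or_lt with rfl | hab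
  · simp [zero_rpow (by linarith : p ≠ 0)]
  have hba : 0 < b - a := sub_pos.2 hab
  have hp0 : 0 ≤ p := by linarith
  have jensen := (convexOn_rpow hp).map_set_average_le (μ := volume) (t := Ioc a b) (f := f)
    (continuousOn_id.rpow_const fun _ _ => Or.inr hp0) isClosed_Ici
    (by simpa [volume_Ioc] using hab) (by simp [volume_Ioc]) (ae_of_all _ fun x => hf0 x)
    hf.integrableOn_Ioc (hf.rpow_const fun _ => Or.inr hp0).integrableOn_Ioc
  simp only [setAverage_eq, smul_eq_mul, volume_real_Ioc_of_le hab.le,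
    ← intervalIntegral.integral_of_le hab.le] at jensen
  calc (∫ x in a..b, f x) ^ p = (b - a) ^ p * ((b - a)⁻¹ * ∫ x in a..b, f x) ^ p := by
        rw [mul_rpow (inv_nonneg.2 hba.le)
            (intervalIntegral.integral_nonneg hab.le fun x _ => hf0 x), inv_rpow hba.le,
          ← mul_assoc, mul_inv_cancel₀ (rpow_pos_of_pos hba p).ne', one_mul]
    _ ≤ (b - a) ^ p * ((b - a)⁻¹ * ∫ x in a..b, f x ^ p) := by gcongr
    _ = (b - a) ^ (p - 1) * ∫ x in a..b, f x ^ p := by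
        rw [rpow_sub_one hba.ne']; ring

theorem signedRpow_stroock_varopoulos {β p : ℝ} (hβ : 0 ≤ β) (hp : 1 ≤ p) (z t : ℝ) :
    (β * p + 1) * |signedRpow β z - signedRpow β t| ^ p ≤
      (β + 1) ^ p * signedRpow (p - 2) (z - t) *
        (signedRpow (β * p) z - signedRpow (β * p) t) := by
  wlog htz : t ≤ z generalizing z t
  · have h := this t z (le_of_not_ge htz)
    rw [abs_sub_comm, ← neg_sub z t, signedRpow_neg] at h
    convert h using 1
    ring
  obtain rfl | htz := htz.eq_or_lt
  · simp [zero_rpow (by linarith : p ≠ 0)]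
  have hzt : 0 < z - t := sub_pos.2 htz
  have hβp : 0 ≤ β * p := mul_nonneg hβ (by linarith)
  have hI : 0 ≤ ∫ s in t..z, |s| ^ β :=
    intervalIntegral.integral_nonneg htz.le fun s _ => rpow_nonneg (abs_nonneg s) β
  have hjensen := rpow_intervalIntegral_le (continuous_abs.rpow_const fun _ => Or.inr hβ)
    (fun s => rpow_nonneg (abs_nonneg s) β) hp htz.le
  simp only [← rpow_mul (abs_nonneg _)] at hjensen
  have hpow : signedRpow (p - 2) (z - t) = (z - t) ^ (p - 1) := by
    rw [signedRpow, abs_of_pos hzt, show p - 2 = p - 1 - 1 by ring, rpow_sub_one hzt.ne',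
      div_mul_cancel₀ _ hzt.ne']
  rw [signedRpow_sub_signedRpow hβ, signedRpow_sub_signedRpow hβp, hpow,
    abs_of_nonneg (mul_nonneg (by linarith) hI), mul_rpow (by linarith) hI]
  calc (β * p + 1) * ((β + 1) ^ p * (∫ s in t..z, |s| ^ β) ^ p)
      ≤ (β * p + 1) * ((β + 1) ^ p * ((z - t) ^ (p - 1) * ∫ s in t..z, |s| ^ (β * p))) := by
        gcongr
    _ = _ := by ring

/-- Pointwise nonlinear Stroock–Varopoulos inequality: for `p, r ∈ [2, ∞)` and
`C_{r,p} = (r-1)(p/(p+r-2))^p`, for all reals `z, t`,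
`|z-t|^{p-2}(z-t)(|z|^{r-2}z - |t|^{r-2}t) ≥ C_{r,p} ||z|^{(r-2)/p}z - |t|^{(r-2)/p}t|^p`. -/
theorem pointwise_stroock_varopoulos (p r : ℝ) (hp : 2 ≤ p) (hr : 2 ≤ r) (z t : ℝ) :
    (r - 1) * (p / (p + r - 2)) ^ p *
        |(|z| ^ ((r - 2) / p) * z - |t| ^ ((r - 2) / p) * t)| ^ p ≤
      |z - t| ^ (p - 2) * (z - t) * (|z| ^ (r - 2) * z - |t| ^ (r - 2) * t) := by
  have hp0 : 0 < p := by linarith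
  have key := signedRpow_stroock_varopoulos (β := (r - 2) / p) (p := p)
    (div_nonneg (by linarith) hp0.le) (by linarith) z t
  rw [div_mul_cancel₀ _ hp0.ne', show (r - 2) / p + 1 = (p + r - 2) / p by field_simp; ring]
    at key
  have hq : 0 < p + r - 2 := by linarith
  have hC : (p / (p + r - 2)) ^ p * ((p + r - 2) / p) ^ p = 1 := by
    rw [← mul_rpow (div_pos hp0 hq).le (div_pos hq hp0).le, div_mul_div_cancel₀ hq.ne',
      div_self hp0.ne', one_rpow]
  unfold signedRpow at key
  calc (r - 1) * (p / (p + r - 2)) ^ p *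
        |(|z| ^ ((r - 2) / p) * z - |t| ^ ((r - 2) / p) * t)| ^ p
      = (p / (p + r - 2)) ^ p * ((r - 2 + 1) *
        |(|z| ^ ((r - 2) / p) * z - |t| ^ ((r - 2) / p) * t)| ^ p) := by ring
    _ ≤ (p / (p + r - 2)) ^ p * (((p + r - 2) / p) ^ p * (|z - t| ^ (p - 2) * (z - t)) *
        (|z| ^ (r - 2) * z - |t| ^ (r - 2) * t)) := by
        gcongr
    _ = _ := by linear_combination (|z - t| ^ (p - 2) * (z - t) *
        (|z| ^ (r - 2) * z - |t| ^ (r - 2) * t)) * hC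
end

section
/- Let N ≥ 1 be an integer, s ∈ (0,1), p ∈ [2, ∞) a real number, and set C_{N,p,s} := s·2^{2s}·Γ((ps+p+N−2)/2)/(π^{N/2}·Γ(1−s)). For a measurable w : ℝ^N → ℝ let Φ(w) := (C_{N,p,s}/(2p)) ∬_{ℝ^N×ℝ^N} |w(x)−w(y)|^p/|x−y|^{N+sp} dx dy. Let u, v : ℝ^N → ℝ be measurable with Φ(u) < ∞ and Φ(v) < ∞. Then the function (x,y) ↦ |u(x)−u(y)|^{p−2}(u(x)−u(y))·((v−u)(x)−(v−u)(y))/|x−y|^{N+sp} is integrable on ℝ^N × ℝ^N and Φ(v) − Φ(u) ≥ (C_{N,p,s}/2) ∬_{ℝ^N×ℝ^N} |u(x)−u(y)|^{p−2}(u(x)−u(y))·((v−u)(x)−(v−u)(y))/|x−y|^{N+sp} dx dy. -/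
open MeasureTheory
open scoped ENNReal

/-- The (possibly infinite) Gagliardo `p`-energy
`∬_{ℝ^N×ℝ^N} |w(x)-w(y)|^p/|x-y|^{N+sp} dx dy`. -/
noncomputable def gagliardoEnergy (N : ℕ) (s p : ℝ)
    (w : EuclideanSpace ℝ (Fin N) → ℝ) : ℝ≥0∞ :=
  ∫⁻ z : EuclideanSpace ℝ (Fin N) × EuclideanSpace ℝ (Fin N),
    ENNReal.ofReal (|w z.1 - w z.2| ^ p / ‖z.1 - z.2‖ ^ ((N : ℝ) + s * p))

/-!
Everything reduces to the pointwise tangent-line inequality for the convex function `t ↦ |t|^p`,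
`|a|^p + p |a|^{p-2} a (b - a) ≤ |b|^p`, which follows from Young's inequality
`|a|^{p-1} |b| ≤ (p-1)/p |a|^p + |b|^p/p`. Young's inequality also bounds the integrand of the
pairing by `2|a|^p + |b|^p`, which gives its integrability; integrating the tangent-line
inequality against the kernel `|x-y|^{-N-sp}` then yields the subgradient inequality.
-/

namespace Real

variable {p : ℝ}

lemma abs_rpow_sub_two_mul_abs (hp : 1 < p) (a : ℝ) : |a| ^ (p - 2) * |a| = |a| ^ (p - 1) := by
  rw [← rpow_add_one' (abs_nonneg a) (by linarith)]
  ring_nf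

lemma abs_rpow_sub_two_mul_self_mul_self (hp : 1 < p) (a : ℝ) :
    |a| ^ (p - 2) * a * a = |a| ^ p := by
  rw [mul_assoc, ← abs_mul_abs_self a, ← mul_assoc, abs_rpow_sub_two_mul_abs hp,
    ← rpow_add_one' (abs_nonneg a) (by linarith)]
  ring_nf

lemma abs_abs_rpow_sub_two_mul (hp : 1 < p) (a : ℝ) : |(|a| ^ (p - 2) * a)| = |a| ^ (p - 1) := by
  rw [abs_mul, abs_of_nonneg (rpow_nonneg (abs_nonneg a) _), abs_rpow_sub_two_mul_abs hp]

lemma abs_rpow_sub_one_mul_abs_le (hp : 1 < p) (a b : ℝ) :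
    |a| ^ (p - 1) * |b| ≤ (p - 1) / p * |a| ^ p + |b| ^ p / p := by
  have young := young_inequality_of_nonneg (rpow_nonneg (abs_nonneg a) (p - 1)) (abs_nonneg b)
    (HolderConjugate.conjExponent hp).symm
  have hp' : p - 1 ≠ 0 := by linarith
  rw [← rpow_mul (abs_nonneg a), conjExponent, mul_div_cancel₀ p hp', div_div_eq_mul_div,
    mul_comm, mul_div_assoc] at young
  linarith

lemma abs_rpow_add_mul_sub_le (hp : 1 < p) (a b : ℝ) :
    |a| ^ p + p * (|a| ^ (p - 2) * a * (b - a)) ≤ |b| ^ p := by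
  have hp0 : 0 < p := by linarith
  have cross : |a| ^ (p - 2) * a * b ≤ (p - 1) / p * |a| ^ p + |b| ^ p / p :=
    calc |a| ^ (p - 2) * a * b ≤ |(|a| ^ (p - 2) * a)| * |b| := by
          rw [← abs_mul]; exact le_abs_self _
      _ = |a| ^ (p - 1) * |b| := by rw [abs_abs_rpow_sub_two_mul hp]
      _ ≤ _ := abs_rpow_sub_one_mul_abs_le hp a b
  have hself := abs_rpow_sub_two_mul_self_mul_self hp a
  have hscaled : p * (|a| ^ (p - 2) * a * b) ≤ (p - 1) * |a| ^ p + |b| ^ p := by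
    have hcancel : p * ((p - 1) / p * |a| ^ p + |b| ^ p / p) = (p - 1) * |a| ^ p + |b| ^ p := by
      field_simp
    exact hcancel ▸ mul_le_mul_of_nonneg_left cross hp0.le
  linear_combination hscaled - p * hself

lemma abs_abs_rpow_sub_two_mul_mul_sub_le (hp : 1 < p) (a b : ℝ) :
    |(|a| ^ (p - 2) * a * (b - a))| ≤ 2 * |a| ^ p + |b| ^ p := by
  have hp0 : 0 < p := by linarith
  have ha : |a| ^ (p - 1) * |a| = |a| ^ p := by
    rw [← rpow_add_one' (abs_nonneg a) (by linarith)]; ring_nf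
  have young := abs_rpow_sub_one_mul_abs_le hp a b
  have hfrac : (p - 1) / p ≤ 1 := by rw [div_le_one hp0]; linarith
  have hinv : |b| ^ p / p ≤ |b| ^ p :=
    div_le_self (rpow_nonneg (abs_nonneg b) p) (by linarith)
  calc |(|a| ^ (p - 2) * a * (b - a))| = |a| ^ (p - 1) * |b - a| := by
        rw [abs_mul, abs_abs_rpow_sub_two_mul hp]
    _ ≤ |a| ^ (p - 1) * (|a| + |b|) := by
        gcongr; exact (abs_sub _ _).trans_eq (add_comm _ _)
    _ = |a| ^ p + |a| ^ (p - 1) * |b| := by rw [mul_add, ha]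
    _ ≤ 2 * |a| ^ p + |b| ^ p := by
        nlinarith [rpow_nonneg (abs_nonneg a) p]

end Real

section WeightedIntegral

variable {α : Type*} [MeasurableSpace α] {μ : Measure α} {p : ℝ} {f g k : α → ℝ}

lemma integrable_abs_rpow_sub_two_mul_mul_sub_div (hp : 1 < p)
    (hf : AEMeasurable f μ) (hg : AEMeasurable g μ) (hk : AEMeasurable k μ) (hk0 : ∀ x, 0 ≤ k x)
    (hfk : Integrable (fun x => |f x| ^ p / k x) μ)
    (hgk : Integrable (fun x => |g x| ^ p / k x) μ) :
    Integrable (fun x => |f x| ^ (p - 2) * f x * (g x - f x) / k x) μ := by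
  refine ((hfk.const_mul 2).add hgk).mono' (AEMeasurable.aestronglyMeasurable (by fun_prop))
    (ae_of_all _ fun x => ?_)
  rw [Pi.add_apply, Real.norm_eq_abs, abs_div, abs_of_nonneg (hk0 x), ← mul_div_assoc, ← add_div]
  exact div_le_div_of_nonneg_right (Real.abs_abs_rpow_sub_two_mul_mul_sub_le hp _ _) (hk0 x)

lemma mul_integral_abs_rpow_sub_two_mul_mul_sub_div_le (hp : 1 < p)
    (hf : AEMeasurable f μ) (hg : AEMeasurable g μ) (hk : AEMeasurable k μ) (hk0 : ∀ x, 0 ≤ k x)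
    (hfk : Integrable (fun x => |f x| ^ p / k x) μ)
    (hgk : Integrable (fun x => |g x| ^ p / k x) μ) :
    p * ∫ x, |f x| ^ (p - 2) * f x * (g x - f x) / k x ∂μ ≤
      (∫ x, |g x| ^ p / k x ∂μ) - ∫ x, |f x| ^ p / k x ∂μ := by
  rw [← integral_const_mul, ← integral_sub hgk hfk]
  refine integral_mono
    ((integrable_abs_rpow_sub_two_mul_mul_sub_div hp hf hg hk hk0 hfk hgk).const_mul p)
    (hgk.sub hfk) fun x => ?_
  rw [← mul_div_assoc, div_sub_div_same]
  exact div_le_div_of_nonneg_right (by linarith [Real.abs_rpow_add_mul_sub_le hp (f x) (g x)])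
    (hk0 x)

end WeightedIntegral

section Gagliardo

variable {N : ℕ} {s p : ℝ} {w : EuclideanSpace ℝ (Fin N) → ℝ}

lemma integrable_of_gagliardoEnergy_lt_top (hw : Measurable w) (hE : gagliardoEnergy N s p w < ⊤) :
    Integrable (fun z : EuclideanSpace ℝ (Fin N) × EuclideanSpace ℝ (Fin N) =>
      |w z.1 - w z.2| ^ p / ‖z.1 - z.2‖ ^ ((N : ℝ) + s * p)) :=
  ⟨AEMeasurable.aestronglyMeasurable (by fun_prop),
    (hasFiniteIntegral_iff_ofReal (ae_of_all _ fun _ => by positivity)).2 hE⟩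

lemma toReal_gagliardoEnergy (hw : Measurable w) :
    (gagliardoEnergy N s p w).toReal =
      ∫ z : EuclideanSpace ℝ (Fin N) × EuclideanSpace ℝ (Fin N),
        |w z.1 - w z.2| ^ p / ‖z.1 - z.2‖ ^ ((N : ℝ) + s * p) :=
  (integral_eq_lintegral_of_nonneg_ae (ae_of_all _ fun _ => by positivity)
    (AEMeasurable.aestronglyMeasurable (by fun_prop))).symm

end Gagliardo

theorem fractional_p_energy_subgradient_general (N : ℕ) (s p : ℝ)
    (hs : 0 < s) (hs1 : s < 1) (hp : 2 ≤ p)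
    (C : ℝ) (hC : C = s * 2 ^ (2 * s) * Real.Gamma ((p * s + p + (N : ℝ) - 2) / 2) /
      (Real.pi ^ ((N : ℝ) / 2) * Real.Gamma (1 - s)))
    (Φ : (EuclideanSpace ℝ (Fin N) → ℝ) → ℝ≥0∞)
    (hΦ : ∀ w, Φ w = ENNReal.ofReal (C / (2 * p)) * gagliardoEnergy N s p w)
    (u v : EuclideanSpace ℝ (Fin N) → ℝ) (hu : Measurable u) (hv : Measurable v)
    (hΦu : Φ u < ⊤) (hΦv : Φ v < ⊤) :
    Integrable (fun z : EuclideanSpace ℝ (Fin N) × EuclideanSpace ℝ (Fin N) =>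
        |u z.1 - u z.2| ^ (p - 2) * (u z.1 - u z.2) *
          ((v z.1 - u z.1) - (v z.2 - u z.2)) / ‖z.1 - z.2‖ ^ ((N : ℝ) + s * p)) ∧
      C / 2 * ∫ z : EuclideanSpace ℝ (Fin N) × EuclideanSpace ℝ (Fin N),
          |u z.1 - u z.2| ^ (p - 2) * (u z.1 - u z.2) *
            ((v z.1 - u z.1) - (v z.2 - u z.2)) / ‖z.1 - z.2‖ ^ ((N : ℝ) + s * p) ≤
        (Φ v).toReal - (Φ u).toReal := by
  have hp1 : 1 < p := by linarith
  have hC0 : 0 < C := by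
    rw [hC]
    have : 0 < Real.Gamma ((p * s + p + (N : ℝ) - 2) / 2) :=
      Real.Gamma_pos_of_pos (by nlinarith [(N.cast_nonneg : (0 : ℝ) ≤ N)])
    have : 0 < Real.Gamma (1 - s) := Real.Gamma_pos_of_pos (by linarith)
    positivity
  have hc : 0 < C / (2 * p) := by positivity
  have hc' : ENNReal.ofReal (C / (2 * p)) ≠ 0 := (ENNReal.ofReal_pos.2 hc).ne'
  have hEu := ENNReal.lt_top_of_mul_ne_top_right (hΦ u ▸ hΦu.ne) hc'
  have hEv := ENNReal.lt_top_of_mul_ne_top_right (hΦ v ▸ hΦv.ne) hc'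
  have hk0 : ∀ z : EuclideanSpace ℝ (Fin N) × EuclideanSpace ℝ (Fin N),
      0 ≤ ‖z.1 - z.2‖ ^ ((N : ℝ) + s * p) := fun _ => by positivity
  have hfk := integrable_of_gagliardoEnergy_lt_top hu hEu
  have hgk := integrable_of_gagliardoEnergy_lt_top hv hEv
  simp only [sub_sub_sub_comm (v _) (u _)]
  refine ⟨integrable_abs_rpow_sub_two_mul_mul_sub_div hp1 (by fun_prop) (by fun_prop)
    (by fun_prop) hk0 hfk hgk, ?_⟩
  have key := mul_integral_abs_rpow_sub_two_mul_mul_sub_div_le hp1 (by fun_prop) (by fun_prop)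
    (by fun_prop) hk0 hfk hgk
  rw [hΦ, hΦ, ENNReal.toReal_mul, ENNReal.toReal_mul, ENNReal.toReal_ofReal hc.le,
    toReal_gagliardoEnergy hu, toReal_gagliardoEnergy hv, ← mul_sub,
    show C / 2 = C / (2 * p) * p by field_simp, mul_assoc]
  exact mul_le_mul_of_nonneg_left key hc.le

/-- Subgradient inequality for the fractional `p`-Dirichlet energy `Φ`:
if `Φ(u), Φ(v) < ∞`, then the fractional `p`-Laplace pairing of `u` against `v - u`
is absolutely convergent and `Φ(v) - Φ(u) ≥ (C_{N,p,s}/2) ∬ |u(x)-u(y)|^{p-2}(u(x)-u(y))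
((v-u)(x)-(v-u)(y))/|x-y|^{N+sp} dx dy`. -/
theorem fractional_p_energy_subgradient (N : ℕ) (hN : 1 ≤ N) (s p : ℝ)
    (hs : 0 < s) (hs1 : s < 1) (hp : 2 ≤ p)
    (C : ℝ) (hC : C = s * 2 ^ (2 * s) * Real.Gamma ((p * s + p + (N : ℝ) - 2) / 2) /
      (Real.pi ^ ((N : ℝ) / 2) * Real.Gamma (1 - s)))
    (Φ : (EuclideanSpace ℝ (Fin N) → ℝ) → ℝ≥0∞)
    (hΦ : ∀ w, Φ w = ENNReal.ofReal (C / (2 * p)) * gagliardoEnergy N s p w)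
    (u v : EuclideanSpace ℝ (Fin N) → ℝ) (hu : Measurable u) (hv : Measurable v)
    (hΦu : Φ u < ⊤) (hΦv : Φ v < ⊤) :
    Integrable (fun z : EuclideanSpace ℝ (Fin N) × EuclideanSpace ℝ (Fin N) =>
        |u z.1 - u z.2| ^ (p - 2) * (u z.1 - u z.2) *
          ((v z.1 - u z.1) - (v z.2 - u z.2)) / ‖z.1 - z.2‖ ^ ((N : ℝ) + s * p)) ∧
      C / 2 * ∫ z : EuclideanSpace ℝ (Fin N) × EuclideanSpace ℝ (Fin N),
          |u z.1 - u z.2| ^ (p - 2) * (u z.1 - u z.2) *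
            ((v z.1 - u z.1) - (v z.2 - u z.2)) / ‖z.1 - z.2‖ ^ ((N : ℝ) + s * p) ≤
        (Φ v).toReal - (Φ u).toReal :=
  fractional_p_energy_subgradient_general N s p hs hs1 hp C hC Φ hΦ u v hu hv hΦu hΦv
end

section
/- Let p, q, C be real numbers with 2 ≤ p < q and C > 0, and set α := C^{−q/(q−p)}, E₀ := (1/p − 1/q)·C^{−pq/(q−p)}, and h(x) := x^p/p − C^q x^q/q for x ≥ 0. Let T ∈ (0, ∞] and let x, y : [0, T) → ℝ be continuous functions with x(t) ≥ 0, y(t) ≥ 0 and y(t) ≤ C·x(t) for all t ∈ [0, T). Define E(t) := x(t)^p/p − y(t)^q/q and assume that E(t) ≤ E(0) for all t ∈ [0, T), that E(0) < E₀, and that x(0) > α. Then there exists β > α with h(β) = E(0) such that for all t ∈ [0, T) one has x(t) ≥ β and y(t) ≥ C·β. -/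
open scoped ENNReal

open Set

/-!
Since `y ≤ C x`, the energy dominates `h(x(t))`, and `h` is strictly decreasing on `[α, ∞)`
from its maximum `h(α) = E₀`. As `h(x(0)) ≤ E(0) < E₀`, the intermediate value theorem gives
`β ∈ (α, x(0)]` with `h(β) = E(0)`; then `x(t) ∈ (α, β)` would force `E(t) ≥ h(x(t)) > E(0)`,
so the continuous `x` can never cross the gap `(α, β)` and stays `≥ β`. Finally `E(t) ≤ h(β)`
together with `x(t) ≥ β` yields `y(t)^q ≥ (Cβ)^q`.
-/

theorem IsPreconnected.forall_le_of_forall_notMem_Ioo {X α : Type*} [TopologicalSpace X]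
    [LinearOrder α] [DenselyOrdered α] [TopologicalSpace α] [OrderClosedTopology α]
    {D : Set X} {f : X → α} {a b : α} {t₀ : X} (hD : IsPreconnected D) (hf : ContinuousOn f D)
    (ht₀ : t₀ ∈ D) (hb : b ≤ f t₀) (hab : a < b) (hgap : ∀ t ∈ D, f t ∉ Ioo a b) :
    ∀ t ∈ D, b ≤ f t := by
  intro t ht
  by_contra! hlt
  have hle : f t ≤ a := by
    by_contra! hgt
    exact hgap t ht ⟨hgt, hlt⟩
  obtain ⟨c, hc⟩ := exists_between hab
  obtain ⟨s, hs, hsc⟩ := (hD.image f hf).Icc_subset (mem_image_of_mem f ht)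
    (mem_image_of_mem f ht₀) ⟨hle.trans hc.1.le, hc.2.le.trans hb⟩
  exact hgap s hs (hsc ▸ hc)

theorem isPreconnected_setOf_nonneg_ofReal_lt (T : ℝ≥0∞) :
    IsPreconnected {t : ℝ | 0 ≤ t ∧ ENNReal.ofReal t < T} :=
  OrdConnected.isPreconnected
    ⟨fun _ ha _ hb _ hs => ⟨ha.1.trans hs.1, (ENNReal.ofReal_le_ofReal hs.2).trans_lt hb.2⟩⟩

noncomputable def energyProfile (p q C x : ℝ) : ℝ := x ^ p / p - C ^ q * x ^ q / q

noncomputable def energyProfileMaxPoint (p q C : ℝ) : ℝ := C ^ (-(q / (q - p)))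

section EnergyProfile

variable {p q C : ℝ}

theorem energyProfileMaxPoint_pos (hC : 0 < C) : 0 < energyProfileMaxPoint p q C :=
  Real.rpow_pos_of_pos hC _

theorem rpow_mul_energyProfileMaxPoint_rpow (hC : 0 < C) (hpq : p ≠ q) :
    C ^ q * energyProfileMaxPoint p q C ^ (q - p) = 1 := by
  have hexp : q + -(q / (q - p)) * (q - p) = 0 := by
    field_simp [sub_ne_zero.2 hpq.symm]
    ring
  rw [energyProfileMaxPoint, ← Real.rpow_mul hC.le, ← Real.rpow_add hC, hexp, Real.rpow_zero]

theorem energyProfile_maxPoint (hC : 0 < C) (hpq : p ≠ q) :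
    energyProfile p q C (energyProfileMaxPoint p q C) =
      (1 / p - 1 / q) * C ^ (-(p * q / (q - p))) := by
  set α := energyProfileMaxPoint p q C
  have hαp : α ^ p = C ^ (-(p * q / (q - p))) := by
    rw [show α = C ^ (-(q / (q - p))) from rfl, ← Real.rpow_mul hC.le]
    ring_nf
  have hαq : C ^ q * α ^ q = α ^ p := by
    rw [← add_sub_cancel p q, Real.rpow_add (energyProfileMaxPoint_pos hC), add_sub_cancel]
    linear_combination α ^ p * rpow_mul_energyProfileMaxPoint_rpow hC hpq
  rw [energyProfile, mul_div_assoc, ← mul_div_assoc, hαq, hαp]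
  ring

theorem hasDerivAt_energyProfile {z : ℝ} (hp : p ≠ 0) (hq : q ≠ 0) (hz : z ≠ 0) :
    HasDerivAt (energyProfile p q C) (z ^ (p - 1) - C ^ q * z ^ (q - 1)) z := by
  have hderiv := ((Real.hasDerivAt_rpow_const (p := p) (Or.inl hz)).div_const p).sub
    (((Real.hasDerivAt_rpow_const (p := q) (Or.inl hz)).const_mul (C ^ q)).div_const q)
  refine HasDerivAt.congr_deriv (f := energyProfile p q C) hderiv ?_
  field_simp

theorem continuousOn_energyProfile : ContinuousOn (energyProfile p q C) (Ioi 0) := by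
  intro z hz
  have hz : z ≠ 0 := (mem_Ioi.1 hz).ne'
  unfold energyProfile
  fun_prop (disch := exact Or.inl hz)

/-- The derivative factors as `z^(p-1) (1 - C^q z^(q-p))`, and `C^q z^(q-p) > 1` beyond the
maximum point. -/
theorem strictAntiOn_energyProfile (hp : 0 < p) (hpq : p < q) (hC : 0 < C) :
    StrictAntiOn (energyProfile p q C) (Ici (energyProfileMaxPoint p q C)) := by
  have hα := energyProfileMaxPoint_pos (p := p) (q := q) hC
  refine strictAntiOn_of_deriv_neg (convex_Ici _)
    (continuousOn_energyProfile.mono fun z hz => hα.trans_le hz) fun z hz => ?_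
  rw [interior_Ici, mem_Ioi] at hz
  have hz0 : 0 < z := hα.trans hz
  rw [(hasDerivAt_energyProfile hp.ne' (hp.trans hpq).ne' hz0.ne').deriv]
  have hgt : 1 < C ^ q * z ^ (q - p) := by
    have hqp : 0 < q - p := sub_pos.2 hpq
    rw [← rpow_mul_energyProfileMaxPoint_rpow hC hpq.ne]
    gcongr
  have hsplit : z ^ (q - 1) = z ^ (p - 1) * z ^ (q - p) := by
    rw [← Real.rpow_add hz0]
    ring_nf
  rw [hsplit]
  nlinarith [Real.rpow_pos_of_pos hz0 (p - 1)]

theorem energyProfile_le_of_le_mul {x y : ℝ} (hq : 0 < q) (hC : 0 ≤ C) (hx : 0 ≤ x) (hy : 0 ≤ y)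
    (hyx : y ≤ C * x) : energyProfile p q C x ≤ x ^ p / p - y ^ q / q := by
  have hyq : y ^ q ≤ C ^ q * x ^ q := by
    rw [← Real.mul_rpow hC hx]
    gcongr
  rw [energyProfile]
  gcongr

theorem mul_le_of_sub_le_energyProfile {x y β : ℝ} (hp : 0 < p) (hq : 0 < q) (hC : 0 ≤ C)
    (hβ : 0 ≤ β) (hβx : β ≤ x) (hy : 0 ≤ y)
    (hE : x ^ p / p - y ^ q / q ≤ energyProfile p q C β) : C * β ≤ y := by
  by_contra! hlt
  have hxp : β ^ p / p ≤ x ^ p / p := by gcongr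
  have hyq : y ^ q / q < C ^ q * β ^ q / q := by
    rw [← Real.mul_rpow hC hβ]
    gcongr
  rw [energyProfile] at hE
  linarith

end EnergyProfile

theorem blowup_step_one_general (p q C : ℝ) (hp : 2 ≤ p) (hpq : p < q) (hC : 0 < C)
    (α E₀ : ℝ) (hα : α = C ^ (-(q / (q - p))))
    (hE₀ : E₀ = (1 / p - 1 / q) * C ^ (-(p * q / (q - p))))
    (h : ℝ → ℝ) (hh : ∀ x, h x = x ^ p / p - C ^ q * x ^ q / q)
    (T : ℝ≥0∞) (hT : 0 < T)
    (D : Set ℝ) (hD : D = {t : ℝ | 0 ≤ t ∧ ENNReal.ofReal t < T})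
    (x y : ℝ → ℝ) (hx : ContinuousOn x D)
    (hx0 : ∀ t ∈ D, 0 ≤ x t) (hy0 : ∀ t ∈ D, 0 ≤ y t)
    (hxy : ∀ t ∈ D, y t ≤ C * x t)
    (E : ℝ → ℝ) (hE : ∀ t, E t = x t ^ p / p - y t ^ q / q)
    (hEdec : ∀ t ∈ D, E t ≤ E 0) (hE0 : E 0 < E₀) (hx0α : α < x 0) :
    ∃ β : ℝ, α < β ∧ h β = E 0 ∧ ∀ t ∈ D, β ≤ x t ∧ C * β ≤ y t := by
  obtain rfl : h = energyProfile p q C := funext hh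
  obtain rfl : α = energyProfileMaxPoint p q C := hα
  have hp0 : 0 < p := by linarith
  have hq0 : 0 < q := hp0.trans hpq
  have hα0 := energyProfileMaxPoint_pos (p := p) (q := q) hC
  have h0D : (0 : ℝ) ∈ D := hD ▸ ⟨le_rfl, by simpa using hT⟩
  have hprofile_le : ∀ t ∈ D, energyProfile p q C (x t) ≤ E t := fun t ht =>
    hE t ▸ energyProfile_le_of_le_mul hq0 hC.le (hx0 t ht) (hy0 t ht) (hxy t ht)
  obtain ⟨β, ⟨hαβ, hβx⟩, hβ⟩ := intermediate_value_Ioc' hx0α.le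
    (continuousOn_energyProfile.mono fun z hz => hα0.trans_le hz.1)
    ⟨hprofile_le 0 h0D, energyProfile_maxPoint hC hpq.ne ▸ hE₀ ▸ hE0⟩
  have hgap : ∀ t ∈ D, x t ∉ Ioo (energyProfileMaxPoint p q C) β := fun t ht hxt => by
    have hlt := strictAntiOn_energyProfile hp0 hpq hC (mem_Ici.2 hxt.1.le) (mem_Ici.2 hαβ.le) hxt.2
    linarith [hprofile_le t ht, hEdec t ht]
  have hxβ := (hD ▸ isPreconnected_setOf_nonneg_ofReal_lt T).forall_le_of_forall_notMem_Ioo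
    hx h0D hβx hαβ hgap
  refine ⟨β, hαβ, hβ, fun t ht => ⟨hxβ t ht, ?_⟩⟩
  exact mul_le_of_sub_le_energyProfile hp0 hq0 hC.le (hα0.trans hαβ).le (hxβ t ht) (hy0 t ht)
    (hβ ▸ hE t ▸ hEdec t ht)

/-- Abstract Step 1 of the blow-up proof (Theorem 2.7): with
`α = C^{-q/(q-p)}`, `E₀ = (1/p - 1/q) C^{-pq/(q-p)}` and
`h(x) = x^p/p - C^q x^q/q`, suppose `x, y` are continuous nonnegative functions on
`[0, T)` (`T ∈ (0, ∞]`) with `y ≤ C x`, the energy `E(t) = x(t)^p/p - y(t)^q/q`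
satisfies `E(t) ≤ E(0)`, `E(0) < E₀` and `x(0) > α`. Then there is `β > α` with
`h(β) = E(0)` such that `x(t) ≥ β` and `y(t) ≥ Cβ` for all `t ∈ [0, T)`. -/
theorem blowup_step_one (p q C : ℝ) (hp : 2 ≤ p) (hpq : p < q) (hC : 0 < C)
    (α E₀ : ℝ) (hα : α = C ^ (-(q / (q - p))))
    (hE₀ : E₀ = (1 / p - 1 / q) * C ^ (-(p * q / (q - p))))
    (h : ℝ → ℝ) (hh : ∀ x, h x = x ^ p / p - C ^ q * x ^ q / q)
    (T : ℝ≥0∞) (hT : 0 < T)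
    (D : Set ℝ) (hD : D = {t : ℝ | 0 ≤ t ∧ ENNReal.ofReal t < T})
    (x y : ℝ → ℝ) (hx : ContinuousOn x D) (hy : ContinuousOn y D)
    (hx0 : ∀ t ∈ D, 0 ≤ x t) (hy0 : ∀ t ∈ D, 0 ≤ y t)
    (hxy : ∀ t ∈ D, y t ≤ C * x t)
    (E : ℝ → ℝ) (hE : ∀ t, E t = x t ^ p / p - y t ^ q / q)
    (hEdec : ∀ t ∈ D, E t ≤ E 0) (hE0 : E 0 < E₀) (hx0α : α < x 0) :
    ∃ β : ℝ, α < β ∧ h β = E 0 ∧ ∀ t ∈ D, β ≤ x t ∧ C * β ≤ y t :=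
  blowup_step_one_general p q C hp hpq hC α E₀ hα hE₀ h hh T hT D hD x y hx hx0 hy0 hxy E hE hEdec
    hE0 hx0α
end

section
/- Let N ≥ 1 be an integer, s ∈ (0,1), and let p, q, r ∈ [2, ∞) be real numbers with p < q, r < q, sp < N and r > N(q−p)/(sp). Let Ω ⊂ ℝ^N be a bounded open set, set p* := Np/(N−sp), C_{N,p,s} := s·2^{2s}·Γ((ps+p+N−2)/2)/(π^{N/2}·Γ(1−s)), and α := (1/r − 1/q)/(1/r − (N−sp)/(Np)). Assume there exists a constant C_* > 0 such that for every measurable w : ℝ^N → ℝ vanishing almost everywhere outside Ω, (∫_Ω |w|^{p*} dx)^{1/p*} ≤ C_* · ( (C_{N,p,s}/2) ∬_{ℝ^N×ℝ^N} |w(x)−w(y)|^p/|x−y|^{N+sp} dx dy )^{1/p}. Then there is a constant C > 0, depending only on C_*, N, p, q, r, s, such that for every measurable u : ℝ^N → ℝ vanishing almost everywhere outside Ω with ∫_Ω |u|^r dx < ∞ and with finite Gagliardo p-energy, (1/q)∫_Ω |u|^q dx ≤ C · Φ(u)^{αq/p} · ( (1/r)∫_Ω |u|^r dx )^{(1−α)q/r},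 where Φ(u) := (C_{N,p,s}/(2p)) ∬_{ℝ^N×ℝ^N} |u(x)−u(y)|^p/|x−y|^{N+sp} dx dy. -/
open MeasureTheory
open scoped ENNReal

/-!
Since `r < q < p*`, the weight `α` is exactly the one with `1/q = α/p* + (1-α)/r`, so Hölder's
inequality gives Lyapunov's interpolation `∫|u|^q ≤ (∫|u|^{p*})^{αq/p*} (∫|u|^r)^{(1-α)q/r}`.
The assumed Sobolev inequality, raised to the power `αq`, bounds the first factor by
`C_*^{αq} (pΦ(u))^{αq/p}`; the constants `1/q`, `p` and `r` are collected into `C`.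
-/

theorem interpolation_weight_mem_Ioo_and_one_div_eq {r q P α : ℝ} (hr : 0 < r) (hrq : r < q)
    (hqP : q < P) (hα : α = (1 / r - 1 / q) / (1 / r - 1 / P)) :
    α ∈ Set.Ioo 0 1 ∧ 1 / q = α / P + (1 - α) / r := by
  have hq : 1 / q < 1 / r := one_div_lt_one_div_of_lt hr hrq
  have hP : 1 / P < 1 / q := one_div_lt_one_div_of_lt (hr.trans hrq) hqP
  have hden : 0 < 1 / r - 1 / P := by linarith
  refine ⟨⟨hα ▸ div_pos (by linarith) hden, hα ▸ (div_lt_one hden).2 (by linarith)⟩, ?_⟩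
  have hmul : α * (1 / r - 1 / P) = 1 / r - 1 / q := by rw [hα, div_mul_cancel₀ _ hden.ne']
  linear_combination hmul

theorem lt_fractionalSobolevExponent {N s p q r : ℝ} (hsp₀ : 0 < s * p) (hsp : s * p < N)
    (hrq : r < q) (hr : N * (q - p) / (s * p) < r) :
    q < N * p / (N - s * p) := by
  rw [div_lt_iff₀ hsp₀] at hr
  rw [lt_div_iff₀ (by linarith)]
  nlinarith

theorem ENNReal.lintegral_rpow_le_lintegral_rpow_mul_lintegral_rpow {X : Type*}
    [MeasurableSpace X] {μ : Measure X} {f : X → ℝ≥0∞} (hf : AEMeasurable f μ)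
    {p₀ p₁ q θ : ℝ} (hp₀ : 0 < p₀) (hp₁ : 0 < p₁) (hθ : θ ∈ Set.Icc 0 1)
    (hq : 1 / q = θ / p₀ + (1 - θ) / p₁) :
    ∫⁻ a, f a ^ q ∂μ ≤
      (∫⁻ a, f a ^ p₀ ∂μ) ^ (θ * q / p₀) * (∫⁻ a, f a ^ p₁ ∂μ) ^ ((1 - θ) * q / p₁) := by
  obtain ⟨hθ₀, hθ₁⟩ := hθ
  have h1θ : 0 ≤ 1 - θ := by linarith
  have hq₀ : 0 < q := by
    refine one_div_pos.1 (hq ▸ ?_)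
    rcases hθ₀.lt_or_eq with hθ₀ | rfl
    · positivity
    · simpa using hp₁
  have hsum : θ * q / p₀ + (1 - θ) * q / p₁ = 1 := by
    rw [mul_div_right_comm, mul_div_right_comm (1 - θ), ← add_mul, ← hq,
      one_div_mul_cancel hq₀.ne']
  calc ∫⁻ a, f a ^ q ∂μ
      = ∫⁻ a, (f a ^ p₀) ^ (θ * q / p₀) * (f a ^ p₁) ^ ((1 - θ) * q / p₁) ∂μ := by
        refine lintegral_congr fun a => ?_
        rw [← ENNReal.rpow_mul, ← ENNReal.rpow_mul, mul_div_cancel₀ _ hp₀.ne',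
          mul_div_cancel₀ _ hp₁.ne', ← ENNReal.rpow_add_of_nonneg _ _ (by positivity)
          (by positivity), ← add_mul, add_sub_cancel, one_mul]
    _ ≤ _ := ENNReal.lintegral_mul_norm_pow_le (hf.pow_const _) (hf.pow_const _)
        (by positivity) (by positivity) hsum

theorem ENNReal.rpow_div_le_mul_rpow_div {a b c : ℝ≥0∞} {P p t : ℝ} (ht : 0 ≤ t)
    (h : a ^ (1 / P) ≤ c * b ^ (1 / p)) : a ^ (t / P) ≤ c ^ t * b ^ (t / p) :=
  calc a ^ (t / P) = (a ^ (1 / P)) ^ t := by rw [← ENNReal.rpow_mul, one_div_mul_eq_div]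
    _ ≤ (c * b ^ (1 / p)) ^ t := ENNReal.rpow_le_rpow h ht
    _ = c ^ t * b ^ (t / p) := by
      rw [ENNReal.mul_rpow_of_nonneg _ _ ht, ← ENNReal.rpow_mul, one_div_mul_eq_div]

theorem ENNReal.ofReal_mul_rpow {c e : ℝ} (hc : 0 ≤ c) (he : 0 ≤ e) (a : ℝ≥0∞) :
    (ENNReal.ofReal c * a) ^ e = ENNReal.ofReal (c ^ e) * a ^ e := by
  rw [ENNReal.mul_rpow_of_nonneg _ _ he, ENNReal.ofReal_rpow_of_nonneg hc he]

theorem lemma33_interpolation_general (N : ℕ) (s p q r : ℝ)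
    (hs : 0 < s) (hp : 2 ≤ p) (hr : 2 ≤ r)
    (hrq : r < q) (hsp : s * p < N)
    (hlow : r > (N : ℝ) * (q - p) / (s * p))
    (Ω : Set (EuclideanSpace ℝ (Fin N)))
    (pstar CNps α : ℝ)
    (hpstar : pstar = (N : ℝ) * p / ((N : ℝ) - s * p))
    (hα : α = (1 / r - 1 / q) / (1 / r - ((N : ℝ) - s * p) / ((N : ℝ) * p)))
    (Cstar : ℝ) (hCstar : 0 < Cstar)
    (hSob : ∀ w : EuclideanSpace ℝ (Fin N) → ℝ, Measurable w →
      (∀ᵐ x ∂(volume : Measure (EuclideanSpace ℝ (Fin N))), x ∉ Ω → w x = 0) →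
      (∫⁻ x in Ω, ENNReal.ofReal (|w x| ^ pstar)) ^ (1 / pstar) ≤
        ENNReal.ofReal Cstar *
          (ENNReal.ofReal (CNps / 2) * gagliardoEnergy N s p w) ^ (1 / p)) :
    ∃ C : ℝ, 0 < C ∧ ∀ u : EuclideanSpace ℝ (Fin N) → ℝ, Measurable u →
      (∀ᵐ x ∂(volume : Measure (EuclideanSpace ℝ (Fin N))), x ∉ Ω → u x = 0) →
      (∫⁻ x in Ω, ENNReal.ofReal (|u x| ^ r)) < ⊤ →
      gagliardoEnergy N s p u < ⊤ →
      ENNReal.ofReal (1 / q) * ∫⁻ x in Ω, ENNReal.ofReal (|u x| ^ q) ≤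
        ENNReal.ofReal C *
          (ENNReal.ofReal (CNps / (2 * p)) * gagliardoEnergy N s p u) ^ (α * q / p) *
          (ENNReal.ofReal (1 / r) *
            ∫⁻ x in Ω, ENNReal.ofReal (|u x| ^ r)) ^ ((1 - α) * q / r) := by
  have hp₀ : 0 < p := by linarith
  have hr₀ : 0 < r := by linarith
  have hq₀ : 0 < q := hr₀.trans hrq
  have hqpstar : q < pstar := hpstar ▸ lt_fractionalSobolevExponent (by positivity) hsp hrq hlow
  have hpstar₀ : 0 < pstar := hq₀.trans hqpstar
  obtain ⟨⟨hα₀, hα₁⟩, hexp⟩ := interpolation_weight_mem_Ioo_and_one_div_eq (α := α)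
    hr₀ hrq hqpstar (by rw [hα, hpstar, one_div_div])
  have h1α : 0 < 1 - α := by linarith
  refine ⟨1 / q * Cstar ^ (α * q) * p ^ (α * q / p) * r ^ ((1 - α) * q / r), by positivity, ?_⟩
  intro u hu hu₀ _ _
  have hpow (t : ℝ) (ht : 0 ≤ t) (x) : ENNReal.ofReal (|u x| ^ t) = ENNReal.ofReal |u x| ^ t :=
    (ENNReal.ofReal_rpow_of_nonneg (abs_nonneg _) ht).symm
  have hlyapunov := ENNReal.lintegral_rpow_le_lintegral_rpow_mul_lintegral_rpow
    (μ := volume.restrict Ω) hu.abs.ennreal_ofReal.aemeasurable hpstar₀ hr₀ ⟨hα₀.le, hα₁.le⟩ hexp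
  simp_rw [← hpow q hq₀.le, ← hpow r hr₀.le, ← hpow pstar hpstar₀.le] at hlyapunov
  have hsob := ENNReal.rpow_div_le_mul_rpow_div (t := α * q) (by positivity) (hSob u hu hu₀)
  calc ENNReal.ofReal (1 / q) * ∫⁻ x in Ω, ENNReal.ofReal (|u x| ^ q)
      ≤ ENNReal.ofReal (1 / q) * (ENNReal.ofReal Cstar ^ (α * q) *
          (ENNReal.ofReal p * (ENNReal.ofReal (CNps / (2 * p)) * gagliardoEnergy N s p u)) ^
            (α * q / p) *
          (ENNReal.ofReal r * (ENNReal.ofReal (1 / r) *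
            ∫⁻ x in Ω, ENNReal.ofReal (|u x| ^ r))) ^ ((1 - α) * q / r)) := by
        rw [← mul_assoc (ENNReal.ofReal r), ← mul_assoc (ENNReal.ofReal p),
          ← ENNReal.ofReal_mul hr₀.le, ← ENNReal.ofReal_mul hp₀.le, mul_one_div_cancel hr₀.ne',
          ENNReal.ofReal_one, one_mul, show p * (CNps / (2 * p)) = CNps / 2 by field_simp]
        gcongr
        exact hlyapunov.trans (by gcongr)
    _ = _ := by
        rw [ENNReal.ofReal_mul_rpow hp₀.le (by positivity),
          ENNReal.ofReal_mul_rpow hr₀.le (by positivity),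
          ENNReal.ofReal_rpow_of_nonneg hCstar.le (by positivity),
          ENNReal.ofReal_mul (by positivity), ENNReal.ofReal_mul (by positivity),
          ENNReal.ofReal_mul (by positivity)]
        ring

/-- Key interpolation estimate of Lemma 3.3 (case `r < q`): assuming the fractional
Sobolev embedding `‖w‖_{L^{p*}(Ω)} ≤ C_* ‖w‖_{W_0^{s,p}(Ω)}` for functions vanishing
outside the bounded open set `Ω`, there is `C > 0` such that for every `u` vanishing
outside `Ω` with `∫_Ω |u|^r < ∞` and finite Gagliardo `p`-energy,
`(1/q)∫_Ω |u|^q ≤ C Φ(u)^{αq/p} ((1/r)∫_Ω |u|^r)^{(1-α)q/r}`, where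
`Φ(u) = (C_{N,p,s}/(2p)) ∬ |u(x)-u(y)|^p/|x-y|^{N+sp}` and
`α = (1/r - 1/q)/(1/r - (N-sp)/(Np))`. -/
theorem lemma33_interpolation (N : ℕ) (hN : 1 ≤ N) (s p q r : ℝ)
    (hs : 0 < s) (hs1 : s < 1) (hp : 2 ≤ p) (hq : 2 ≤ q) (hr : 2 ≤ r)
    (hpq : p < q) (hrq : r < q) (hsp : s * p < N)
    (hlow : r > (N : ℝ) * (q - p) / (s * p))
    (Ω : Set (EuclideanSpace ℝ (Fin N))) (hΩo : IsOpen Ω)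
    (hΩb : Bornology.IsBounded Ω)
    (pstar CNps α : ℝ)
    (hpstar : pstar = (N : ℝ) * p / ((N : ℝ) - s * p))
    (hCNps : CNps = s * 2 ^ (2 * s) * Real.Gamma ((p * s + p + (N : ℝ) - 2) / 2) /
      (Real.pi ^ ((N : ℝ) / 2) * Real.Gamma (1 - s)))
    (hα : α = (1 / r - 1 / q) / (1 / r - ((N : ℝ) - s * p) / ((N : ℝ) * p)))
    (Cstar : ℝ) (hCstar : 0 < Cstar)
    (hSob : ∀ w : EuclideanSpace ℝ (Fin N) → ℝ, Measurable w →
      (∀ᵐ x ∂(volume : Measure (EuclideanSpace ℝ (Fin N))), x ∉ Ω → w x = 0) →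
      (∫⁻ x in Ω, ENNReal.ofReal (|w x| ^ pstar)) ^ (1 / pstar) ≤
        ENNReal.ofReal Cstar *
          (ENNReal.ofReal (CNps / 2) * gagliardoEnergy N s p w) ^ (1 / p)) :
    ∃ C : ℝ, 0 < C ∧ ∀ u : EuclideanSpace ℝ (Fin N) → ℝ, Measurable u →
      (∀ᵐ x ∂(volume : Measure (EuclideanSpace ℝ (Fin N))), x ∉ Ω → u x = 0) →
      (∫⁻ x in Ω, ENNReal.ofReal (|u x| ^ r)) < ⊤ →
      gagliardoEnergy N s p u < ⊤ →
      ENNReal.ofReal (1 / q) * ∫⁻ x in Ω, ENNReal.ofReal (|u x| ^ q) ≤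
        ENNReal.ofReal C *
          (ENNReal.ofReal (CNps / (2 * p)) * gagliardoEnergy N s p u) ^ (α * q / p) *
          (ENNReal.ofReal (1 / r) *
            ∫⁻ x in Ω, ENNReal.ofReal (|u x| ^ r)) ^ ((1 - α) * q / r) :=
  lemma33_interpolation_general N s p q r hs hp hr hrq hsp hlow Ω pstar CNps α hpstar hα Cstar
    hCstar hSob
end

section
/- Let N ≥ 1 be an integer, s ∈ (0,1), and let p, q, r ∈ [2, ∞) be real numbers with p < q, sp < N and r > N(q−p)/(sp). Let Ω ⊂ ℝ^N be a bounded open set, set p* := Np/(N−sp), C_{N,p,s} := s·2^{2s}·Γ((ps+p+N−2)/2)/(π^{N/2}·Γ(1−s)), ρ := p(q+r−2)/(r+p−2), and α := ((r+p−2)/(pr) − (r+p−2)/(p(q+r−2))) / ((r+p−2)/(pr) − (N−sp)/(Np)). Assume there exists a constant C_* > 0 such that for every measurable w : ℝ^N → ℝ vanishing almost everywhere outside Ω, (∫_Ω |w|^{p*} dx)^{1/p*} ≤ C_* · ( (C_{N,p,s}/2) ∬_{ℝ^N×ℝ^N} |w(x)−w(y)|^p/|x−y|^{N+sp} dx dy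 )^{1/p}. Then there is a constant C > 0, depending only on C_*, N, p, q, r, s, such that for every measurable u : ℝ^N → ℝ vanishing almost everywhere outside Ω with ∫_Ω |u|^r dx < ∞ and such that v := |u|^{(r−2)/p} u has finite Gagliardo p-energy, one has ∫_Ω |u|^{q+r−2} dx ≤ C · ( (C_{N,p,s}/2) ∬_{ℝ^N×ℝ^N} |v(x)−v(y)|^p/|x−y|^{N+sp} dx dy )^{αρ/p} · ( ∫_Ω |u|^r dx )^{(1−α)(q+r−2)/r}. -/
/-!
Put `v = |u|^{(r-2)/p} u` and `a = pr/(r+p-2)`, so that `|u|^{q+r-2} = |v|^ρ` and `|u|^r = |v|^a`.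
The hypothesis on `r` gives `a < ρ < p*`, and `α` is exactly the weight with
`1/ρ = α/p* + (1-α)/a`. Hölder's inequality then interpolates `∫ |v|^ρ` between `∫ |v|^{p*}`,
which the Sobolev inequality bounds by the Gagliardo energy of `v`, and `∫ |v|^a = ∫ |u|^r`.
-/

open MeasureTheory
open scoped ENNReal

theorem lintegral_rpow_le_interpolation {α : Type*} [MeasurableSpace α] (μ : Measure α)
    {f : α → ℝ≥0∞} (hf : AEMeasurable f μ) {a b ρ θ : ℝ} (ha : 0 < a) (hb : 0 < b)
    (hθ₀ : 0 < θ) (hθ₁ : θ < 1) (hρ : 1 / ρ = θ / b + (1 - θ) / a) :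
    ∫⁻ x, f x ^ ρ ∂μ ≤
      (∫⁻ x, f x ^ b ∂μ) ^ (θ * ρ / b) * (∫⁻ x, f x ^ a ∂μ) ^ ((1 - θ) * ρ / a) := by
  have hθ₁' : 0 < 1 - θ := sub_pos.mpr hθ₁
  have hρ₀ : 0 < ρ := one_div_pos.mp (hρ ▸ by positivity)
  have hρb : ρ < b / θ := by
    rw [← one_div_lt_one_div (by positivity) hρ₀, hρ, one_div_div]
    exact lt_add_of_pos_right _ (by positivity)
  have hHolder := ENNReal.lintegral_Lp_mul_le_Lq_mul_Lr (r := a / (1 - θ)) hρ₀ hρb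
    (by rw [hρ, one_div_div, one_div_div]) μ
    (hf.pow_const θ) (hf.pow_const (1 - θ))
  have hsplit : ∀ x, (fun x ↦ f x ^ θ) x * (fun x ↦ f x ^ (1 - θ)) x = f x := fun x ↦ by
    rw [← ENNReal.rpow_add_of_nonneg _ _ hθ₀.le hθ₁'.le, add_sub_cancel, ENNReal.rpow_one]
  simp only [Pi.mul_apply, hsplit, ← ENNReal.rpow_mul,
    mul_div_cancel₀ b hθ₀.ne', mul_div_cancel₀ a hθ₁'.ne'] at hHolder
  calc ∫⁻ x, f x ^ ρ ∂μ = ((∫⁻ x, f x ^ ρ ∂μ) ^ (1 / ρ)) ^ ρ := by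
        rw [← ENNReal.rpow_mul, one_div_mul_cancel hρ₀.ne', ENNReal.rpow_one]
    _ ≤ ((∫⁻ x, f x ^ b ∂μ) ^ (1 / (b / θ)) * (∫⁻ x, f x ^ a ∂μ) ^ (1 / (a / (1 - θ)))) ^ ρ :=
        ENNReal.rpow_le_rpow hHolder hρ₀.le
    _ = _ := by
        rw [ENNReal.mul_rpow_of_nonneg _ _ hρ₀.le, ← ENNReal.rpow_mul, ← ENNReal.rpow_mul]
        congr 2 <;> field_simp

theorem interpolation_exponent_spec {a ρ b θ : ℝ} (ha : 0 < a) (haρ : a < ρ) (hρb : ρ < b)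
    (hθ : θ = (1 / a - 1 / ρ) / (1 / a - 1 / b)) :
    0 < θ ∧ θ < 1 ∧ 1 / ρ = θ / b + (1 - θ) / a := by
  have hρ : 1 / ρ < 1 / a := one_div_lt_one_div_of_lt ha haρ
  have hb : 1 / b < 1 / ρ := one_div_lt_one_div_of_lt (ha.trans haρ) hρb
  have hden : 0 < 1 / a - 1 / b := by linarith
  refine ⟨hθ ▸ div_pos (by linarith) hden, hθ ▸ (div_lt_one hden).mpr (by linarith), ?_⟩
  have hθ' : θ * (1 / a - 1 / b) = 1 / a - 1 / ρ := by rw [hθ, div_mul_cancel₀ _ hden.ne']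
  linear_combination hθ'

theorem abs_abs_rpow_mul_self (x : ℝ) {γ : ℝ} (hγ : γ + 1 ≠ 0) :
    |(|x| ^ γ * x)| = |x| ^ (γ + 1) := by
  rw [abs_mul, abs_of_nonneg (Real.rpow_nonneg (abs_nonneg x) γ),
    Real.rpow_add_one' (abs_nonneg x) hγ]

theorem ENNReal.ofReal_abs_abs_rpow_mul_self_rpow (x : ℝ) {γ e : ℝ} (hγ : 0 < γ + 1)
    (he : 0 ≤ e) :
    ENNReal.ofReal |(|x| ^ γ * x)| ^ e = ENNReal.ofReal (|x| ^ ((γ + 1) * e)) := by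
  rw [ENNReal.ofReal_rpow_of_nonneg (abs_nonneg _) he, abs_abs_rpow_mul_self x hγ.ne',
    Real.rpow_mul (abs_nonneg x)]

theorem ENNReal.rpow_div_le_of_rpow_one_div_le {X E : ℝ≥0∞} {c b p γ : ℝ} (hc : 0 < c)
    (hγ : 0 ≤ γ) (h : X ^ (1 / b) ≤ ENNReal.ofReal c * E ^ (1 / p)) :
    X ^ (γ / b) ≤ ENNReal.ofReal (c ^ γ) * E ^ (γ / p) := by
  calc X ^ (γ / b) = (X ^ (1 / b)) ^ γ := by rw [← ENNReal.rpow_mul, one_div_mul_eq_div]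
    _ ≤ (ENNReal.ofReal c * E ^ (1 / p)) ^ γ := ENNReal.rpow_le_rpow h hγ
    _ = ENNReal.ofReal (c ^ γ) * E ^ (γ / p) := by
      rw [ENNReal.mul_rpow_of_nonneg _ _ hγ, ← ENNReal.rpow_mul, one_div_mul_eq_div,
        ENNReal.ofReal_rpow_of_pos hc]

theorem exponent_ordering {N s p q r : ℝ} (hs : 0 < s) (hp : 2 ≤ p) (hpq : p < q)
    (hsp : s * p < N) (hlow : r > N * (q - p) / (s * p)) :
    0 < r ∧ p * r / (r + p - 2) < p * (q + r - 2) / (r + p - 2) ∧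
      p * (q + r - 2) / (r + p - 2) < N * p / (N - s * p) := by
  have hsp₀ : 0 < s * p := by positivity
  have hNsp : 0 < N - s * p := sub_pos.mpr hsp
  have hlow' : N * (q - p) < r * (s * p) := (div_lt_iff₀ hsp₀).mp hlow
  have hr : 0 < r := pos_of_mul_pos_left (by nlinarith) hsp₀.le
  have hrp : 0 < r + p - 2 := by linarith
  refine ⟨hr, by gcongr; linarith, ?_⟩
  rw [div_lt_div_iff₀ hrp hNsp]
  nlinarith [mul_lt_mul_of_pos_left hlow' (by positivity : 0 < p),
    mul_nonneg hsp₀.le (mul_nonneg (by positivity : 0 ≤ p) (by linarith : (0 : ℝ) ≤ q - 2))]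

theorem lemma10_core_estimate_general (N : ℕ) (s p q r : ℝ)
    (hs : 0 < s) (hp : 2 ≤ p)
    (hpq : p < q) (hsp : s * p < N)
    (hlow : r > (N : ℝ) * (q - p) / (s * p))
    (Ω : Set (EuclideanSpace ℝ (Fin N)))
    (pstar CNps ρ α : ℝ)
    (hpstar : pstar = (N : ℝ) * p / ((N : ℝ) - s * p))
    (hρ : ρ = p * (q + r - 2) / (r + p - 2))
    (hα : α = ((r + p - 2) / (p * r) - (r + p - 2) / (p * (q + r - 2))) /
      ((r + p - 2) / (p * r) - ((N : ℝ) - s * p) / ((N : ℝ) * p)))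
    (Cstar : ℝ) (hCstar : 0 < Cstar)
    (hSob : ∀ w : EuclideanSpace ℝ (Fin N) → ℝ, Measurable w →
      (∀ᵐ x ∂(volume : Measure (EuclideanSpace ℝ (Fin N))), x ∉ Ω → w x = 0) →
      (∫⁻ x in Ω, ENNReal.ofReal (|w x| ^ pstar)) ^ (1 / pstar) ≤
        ENNReal.ofReal Cstar *
          (ENNReal.ofReal (CNps / 2) * gagliardoEnergy N s p w) ^ (1 / p)) :
    ∃ C : ℝ, 0 < C ∧ ∀ u v : EuclideanSpace ℝ (Fin N) → ℝ, Measurable u →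
      (v = fun x => |u x| ^ ((r - 2) / p) * u x) →
      (∀ᵐ x ∂(volume : Measure (EuclideanSpace ℝ (Fin N))), x ∉ Ω → u x = 0) →
      (∫⁻ x in Ω, ENNReal.ofReal (|u x| ^ r)) < ⊤ →
      gagliardoEnergy N s p v < ⊤ →
      (∫⁻ x in Ω, ENNReal.ofReal (|u x| ^ (q + r - 2))) ≤
        ENNReal.ofReal C *
          (ENNReal.ofReal (CNps / 2) * gagliardoEnergy N s p v) ^ (α * ρ / p) *
          (∫⁻ x in Ω, ENNReal.ofReal (|u x| ^ r)) ^ ((1 - α) * (q + r - 2) / r) := by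
  obtain ⟨hr₀, haρ, hρpstar⟩ := exponent_ordering (N := (N : ℝ)) hs hp hpq hsp hlow
  have hp₀ : 0 < p := by linarith
  have hrp : 0 < r + p - 2 := by linarith
  set a := p * r / (r + p - 2) with ha
  rw [← hρ] at haρ hρpstar
  rw [← hpstar] at hρpstar
  have ha₀ : 0 < a := by positivity
  obtain ⟨hα₀, hα₁, hinterp⟩ := interpolation_exponent_spec (θ := α) ha₀ haρ hρpstar
    (by rw [hα, ha, hρ, hpstar, one_div_div, one_div_div, one_div_div])
  have hρ₀ : 0 < ρ := ha₀.trans haρ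
  have hpstar₀ : 0 < pstar := hρ₀.trans hρpstar
  have hγ : 0 < (r - 2) / p + 1 := by
    rw [div_add_one hp₀.ne']; exact div_pos (by linarith) hp₀
  have hρ_exp : ((r - 2) / p + 1) * ρ = q + r - 2 := by rw [hρ]; field_simp; ring
  have ha_exp : ((r - 2) / p + 1) * a = r := by rw [ha]; field_simp; ring
  have hαa_exp : (1 - α) * ρ / a = (1 - α) * (q + r - 2) / r := by rw [hρ, ha]; field_simp
  refine ⟨Cstar ^ (α * ρ), by positivity, ?_⟩
  rintro u v hu rfl hu₀ - -
  set v := fun x ↦ |u x| ^ ((r - 2) / p) * u x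
  have hv : Measurable v := (hu.abs.pow_const _).mul hu
  have hSob_v := hSob v hv (by filter_upwards [hu₀] with x hx hxΩ; simp [v, hx hxΩ])
  rw [lintegral_congr fun x ↦ (ENNReal.ofReal_rpow_of_nonneg (abs_nonneg (v x)) hpstar₀.le).symm]
    at hSob_v
  calc ∫⁻ x in Ω, ENNReal.ofReal (|u x| ^ (q + r - 2))
      = ∫⁻ x in Ω, ENNReal.ofReal |v x| ^ ρ := by
        simp_rw [v, ENNReal.ofReal_abs_abs_rpow_mul_self_rpow _ hγ hρ₀.le, hρ_exp]
    _ ≤ (∫⁻ x in Ω, ENNReal.ofReal |v x| ^ pstar) ^ (α * ρ / pstar) *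
          (∫⁻ x in Ω, ENNReal.ofReal |v x| ^ a) ^ ((1 - α) * ρ / a) :=
        lintegral_rpow_le_interpolation _ hv.abs.ennreal_ofReal.aemeasurable ha₀ hpstar₀
          hα₀ hα₁ hinterp
    _ ≤ _ := by
        simp_rw [v, ENNReal.ofReal_abs_abs_rpow_mul_self_rpow _ hγ ha₀.le, ha_exp, hαa_exp]
        gcongr
        exact ENNReal.rpow_div_le_of_rpow_one_div_le hCstar (by positivity) hSob_v

/-- Core estimate (E4) in the proof of Lemma 3.4: assuming the fractional Sobolev
embedding `‖w‖_{L^{p*}(Ω)} ≤ C_* ‖w‖_{W_0^{s,p}(Ω)}` for functions vanishing outside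
the bounded open set `Ω`, with `ρ = p(q+r-2)/(r+p-2)` and the interpolation exponent
`α`, there is `C > 0` such that for every `u` vanishing outside `Ω` with
`∫_Ω |u|^r < ∞` and such that `v = |u|^{(r-2)/p} u` has finite Gagliardo `p`-energy,
`∫_Ω |u|^{q+r-2} ≤ C ((C_{N,p,s}/2) ∬ |v(x)-v(y)|^p/|x-y|^{N+sp})^{αρ/p}
(∫_Ω |u|^r)^{(1-α)(q+r-2)/r}`. -/
theorem lemma10_core_estimate (N : ℕ) (hN : 1 ≤ N) (s p q r : ℝ)
    (hs : 0 < s) (hs1 : s < 1) (hp : 2 ≤ p) (hq : 2 ≤ q) (hr : 2 ≤ r)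
    (hpq : p < q) (hsp : s * p < N)
    (hlow : r > (N : ℝ) * (q - p) / (s * p))
    (Ω : Set (EuclideanSpace ℝ (Fin N))) (hΩo : IsOpen Ω)
    (hΩb : Bornology.IsBounded Ω)
    (pstar CNps ρ α : ℝ)
    (hpstar : pstar = (N : ℝ) * p / ((N : ℝ) - s * p))
    (hCNps : CNps = s * 2 ^ (2 * s) * Real.Gamma ((p * s + p + (N : ℝ) - 2) / 2) /
      (Real.pi ^ ((N : ℝ) / 2) * Real.Gamma (1 - s)))
    (hρ : ρ = p * (q + r - 2) / (r + p - 2))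
    (hα : α = ((r + p - 2) / (p * r) - (r + p - 2) / (p * (q + r - 2))) /
      ((r + p - 2) / (p * r) - ((N : ℝ) - s * p) / ((N : ℝ) * p)))
    (Cstar : ℝ) (hCstar : 0 < Cstar)
    (hSob : ∀ w : EuclideanSpace ℝ (Fin N) → ℝ, Measurable w →
      (∀ᵐ x ∂(volume : Measure (EuclideanSpace ℝ (Fin N))), x ∉ Ω → w x = 0) →
      (∫⁻ x in Ω, ENNReal.ofReal (|w x| ^ pstar)) ^ (1 / pstar) ≤
        ENNReal.ofReal Cstar *
          (ENNReal.ofReal (CNps / 2) * gagliardoEnergy N s p w) ^ (1 / p)) :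
    ∃ C : ℝ, 0 < C ∧ ∀ u v : EuclideanSpace ℝ (Fin N) → ℝ, Measurable u →
      (v = fun x => |u x| ^ ((r - 2) / p) * u x) →
      (∀ᵐ x ∂(volume : Measure (EuclideanSpace ℝ (Fin N))), x ∉ Ω → u x = 0) →
      (∫⁻ x in Ω, ENNReal.ofReal (|u x| ^ r)) < ⊤ →
      gagliardoEnergy N s p v < ⊤ →
      (∫⁻ x in Ω, ENNReal.ofReal (|u x| ^ (q + r - 2))) ≤
        ENNReal.ofReal C *
          (ENNReal.ofReal (CNps / 2) * gagliardoEnergy N s p v) ^ (α * ρ / p) *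
          (∫⁻ x in Ω, ENNReal.ofReal (|u x| ^ r)) ^ ((1 - α) * (q + r - 2) / r) :=
  lemma10_core_estimate_general N s p q r hs hp hpq hsp hlow Ω pstar CNps ρ α hpstar hρ hα Cstar
    hCstar hSob
end
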